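/- Let F be the free group on two generators a, b, let φ ∈ Aut(F) be determined by φ(a) = a, φ(b) = ba, and let Φ ∈ Out(F) be its outer class. Out(F) is finitely generated (it is isomorphic to GL₂(ℤ)); fix a finite generating set T of Out(F) with associated word metric d_T. Then n ↦ d_T(1, Φⁿ) grows linearly (it is equivalent to n ↦ n), while n ↦ d_Lip(1, Φⁿ) grows logarithmically (equivalent to n ↦ ln(n+1)); consequently the identity map of Out(F) is not a quasi-isometry between (Out(F), d_Lip) and (Out(F), d_T), i.e. the Lipschitz pseudo-metric and the word metric on Out(F) are not quasi-isometric. -/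

import Mathlib

open Set Pointwise

variable {G : Type*} [Group G]

/-- The word length of `g` with respect to a generating set `S`:
the least `n` such that `g` is a product of `n` elements of `S ∪ S⁻¹`. -/
noncomputable def wordLength (S : Set G) (g : G) : ℕ :=
  sInf {n : ℕ | ∃ l : List G, l.length = n ∧ (∀ x ∈ l, x ∈ S ∪ S⁻¹) ∧ l.prod = g}

/-- The word metric associated to a generating set `S`, as a real number. -/
noncomputable def wordDist (S : Set G) (g h : G) : ℝ :=
  (wordLength S (g⁻¹ * h) : ℝ)

/-- The conjugacy norm of (the conjugacy class of) `g`: the minimal word length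
of an element conjugate to `g`. -/
noncomputable def conjNorm (S : Set G) (g : G) : ℕ :=
  sInf {n : ℕ | ∃ x : G, n = wordLength S (x * g * x⁻¹)}

/-- The Lipschitz pseudo-metric, computed on automorphisms (it only depends on the
outer classes): `d_Lip(φ₁, φ₂) = ln sup_c ‖φ₂⁻¹(c)‖ / ‖φ₁⁻¹(c)‖`, the supremum being
over all non-trivial conjugacy classes `c`. -/
noncomputable def dLipAut (S : Set G) (φ₁ φ₂ : MulAut G) : ℝ :=
  Real.log (sSup {r : ℝ | ∃ g : G, g ≠ 1 ∧
    r = (conjNorm S (φ₂⁻¹ g) : ℝ) / (conjNorm S (φ₁⁻¹ g) : ℝ)})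

instance : ((MulAut.conj : G →* MulAut G).range).Normal := by
  constructor
  rintro x ⟨g, rfl⟩ ψ
  refine ⟨ψ g, ?_⟩
  ext y
  simp [MulAut.conj, mul_assoc]

/-- The outer automorphism group `Out(G) = Aut(G)/Inn(G)`. -/
abbrev OutGroup (G : Type*) [Group G] :=
  MulAut G ⧸ (MulAut.conj : G →* MulAut G).range

/-- The Lipschitz pseudo-metric on `Out(G)`; it is computed using any
representatives of the outer classes (the value does not depend on this choice,
whence the infimum). -/
noncomputable def dLipOut (S : Set G) (Φ₁ Φ₂ : OutGroup G) : ℝ :=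
  sInf {d : ℝ | ∃ φ₁ φ₂ : MulAut G, (φ₁ : OutGroup G) = Φ₁ ∧ (φ₂ : OutGroup G) = Φ₂ ∧
    d = dLipAut S φ₁ φ₂}

/-- Gromov hyperbolicity (four-point condition) for the word metric of `(G, S)`. -/
def IsHyperbolic (S : Set G) : Prop :=
  ∃ δ : ℝ, 0 ≤ δ ∧ ∀ x y z w : G,
    wordDist S x z + wordDist S y w ≤
      max (wordDist S x y + wordDist S z w) (wordDist S x w + wordDist S y z) + 2 * δ

/-- A group is virtually cyclic if it has a cyclic subgroup of finite index;
a group is *non-elementary* if it is not virtually cyclic. -/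
def IsVirtuallyCyclic (G : Type*) [Group G] : Prop :=
  ∃ H : Subgroup G, H.FiniteIndex ∧ IsCyclic H

/-- A length function on a group `H`. -/
structure IsLengthFunction {H : Type*} [Group H] (L : H → ℕ) : Prop where
  eq_zero_iff : ∀ h : H, L h = 0 ↔ h = 1
  inv_eq : ∀ h : H, L h⁻¹ = L h
  subadd : ∀ h₁ h₂ : H, L (h₁ * h₂) ≤ L h₁ + L h₂
  growth : ∃ lam : ℝ, 0 < lam ∧ ∀ r : ℕ, ∃ t : Finset H,
    {h : H | L h ≤ r} ⊆ ↑t ∧ (t.card : ℝ) ≤ lam ^ r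

/-- A length function on the (additive) group `ℤ`. -/
structure IsLengthFunctionZ (L : ℤ → ℕ) : Prop where
  eq_zero_iff : ∀ n : ℤ, L n = 0 ↔ n = 0
  neg_eq : ∀ n : ℤ, L (-n) = L n
  subadd : ∀ m n : ℤ, L (m + n) ≤ L m + L n
  growth : ∃ lam : ℝ, 0 < lam ∧ ∀ r : ℕ, ∃ t : Finset ℤ,
    {n : ℤ | L n ≤ r} ⊆ ↑t ∧ (t.card : ℝ) ≤ lam ^ r

/-- `f₁ ≺ f₂` for functions on `ℤ`. -/
def PrecZ (f₁ f₂ : ℤ → ℝ) : Prop := ∃ C : ℝ, 0 < C ∧ ∀ n : ℤ, f₁ n ≤ C * f₂ n + C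

/-- `f₁ ≍ f₂` (equivalence of growth) for functions on `ℤ`. -/
def EquivZ (f₁ f₂ : ℤ → ℝ) : Prop := PrecZ f₁ f₂ ∧ PrecZ f₂ f₁

/-- `f₁ ≺ f₂` for functions on `ℕ`. -/
def PrecN (f₁ f₂ : ℕ → ℝ) : Prop := ∃ C : ℝ, 0 < C ∧ ∀ n : ℕ, f₁ n ≤ C * f₂ n + C

/-- `f₁ ≍ f₂` (equivalence of growth) for functions on `ℕ`. -/
def EquivN (f₁ f₂ : ℕ → ℝ) : Prop := PrecN f₁ f₂ ∧ PrecN f₂ f₁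

/-- A group is finitely presented if it is isomorphic to the quotient of a
finitely generated free group by the normal closure of finitely many relators. -/
def FinitelyPresented (Q : Type*) [Group Q] : Prop :=
  ∃ (n : ℕ) (rels : Finset (FreeGroup (Fin n))),
    Nonempty (PresentedGroup (↑rels : Set (FreeGroup (Fin n))) ≃* Q)

/-- A geodesic from `x` to `y` in a metric space, recorded as its image `s`. -/
def IsGeodesicFrom {X : Type*} [MetricSpace X] (s : Set X) (x y : X) : Prop :=
  ∃ γ : ℝ → X, γ 0 = x ∧ γ (dist x y) = y ∧
    (∀ u ∈ Set.Icc (0:ℝ) (dist x y), ∀ v ∈ Set.Icc (0:ℝ) (dist x y),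
      dist (γ u) (γ v) = |u - v|) ∧
    s = γ '' Set.Icc (0:ℝ) (dist x y)

/-- A geodesic metric space: any two points are joined by a geodesic. -/
def GeodesicSpace (X : Type*) [MetricSpace X] : Prop :=
  ∀ x y : X, ∃ s : Set X, IsGeodesicFrom s x y

/-- All geodesic triangles are `δ`-thin: each side lies in the `δ`-neighborhood of
the union of the other two sides. -/
def ThinTriangles (X : Type*) [MetricSpace X] (δ : ℝ) : Prop :=
  ∀ x y z : X, ∀ s₁ s₂ s₃ : Set X,
    IsGeodesicFrom s₁ x y → IsGeodesicFrom s₂ y z → IsGeodesicFrom s₃ x z →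
    ∀ p ∈ s₃, ∃ q ∈ s₁ ∪ s₂, dist p q ≤ δ

/-!
The abelianization `Out(F₂) → GL₂(ℤ)` sends `Φ` to `T = !![1, 1; 0, 1]`. On `GL₂(ℤ)` the function
`M ↦ ⌊M • ∞⌋` moves by a bounded amount under right multiplication by any fixed element and equals
`n` at `Tⁿ`; pulled back to `Out(F₂)` it shows that `|Φⁿ|_T ≥ n / K`, while subadditivity gives
`|Φⁿ|_T ≤ n |Φ|_T`.

On the other side `φ⁻ⁿ` sends `a ↦ a` and `b ↦ b a⁻ⁿ`, so it multiplies conjugacy lengths by at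
most `n + 1`, and exactly by `n + 1` at `b`: the exponent sums of `b a⁻ⁿ` are `(-n, 1)`, they are
conjugation invariant, and each letter changes them by one. Hence `d_Lip(1, Φⁿ) = log (n + 1)`, and
a quasi-isometry would bound `n` by a multiple of `log (n + 1)`.
-/

section WordLength

variable {S : Set G}

theorem wordLength_le_length {l : List G} (hl : ∀ x ∈ l, x ∈ S ∪ S⁻¹) :
    wordLength S l.prod ≤ l.length :=
  Nat.sInf_le ⟨l, rfl, hl, rfl⟩

theorem exists_list_length_eq_wordLength (hS : Subgroup.closure S = ⊤) (g : G) :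
    ∃ l : List G, l.length = wordLength S g ∧ (∀ x ∈ l, x ∈ S ∪ S⁻¹) ∧ l.prod = g := by
  have hg : g ∈ Submonoid.closure (S ∪ S⁻¹) := by
    rw [← Subgroup.closure_toSubmonoid, hS]
    trivial
  obtain ⟨l, hl, hg⟩ := Submonoid.exists_list_of_mem_closure hg
  exact Nat.sInf_mem (s := {n | ∃ l : List G, l.length = n ∧ (∀ x ∈ l, x ∈ S ∪ S⁻¹) ∧ l.prod = g})
    ⟨l.length, l, rfl, hl, hg⟩

theorem wordLength_one : wordLength S (1 : G) = 0 :=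
  Nat.le_zero.mp (wordLength_le_length (l := []) (by simp))

theorem wordLength_le_one_of_mem {s : G} (hs : s ∈ S) : wordLength S s ≤ 1 := by
  simpa using wordLength_le_length (S := S) (l := [s]) (by simpa using Or.inl hs)

theorem eq_one_of_wordLength_eq_zero (hS : Subgroup.closure S = ⊤) {g : G}
    (h : wordLength S g = 0) : g = 1 := by
  obtain ⟨l, hlen, -, rfl⟩ := exists_list_length_eq_wordLength hS g
  rw [h, List.length_eq_zero_iff] at hlen
  simp [hlen]

theorem wordLength_mul_le (hS : Subgroup.closure S = ⊤) (g h : G) :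
    wordLength S (g * h) ≤ wordLength S g + wordLength S h := by
  obtain ⟨l₁, hl₁, hm₁, rfl⟩ := exists_list_length_eq_wordLength hS g
  obtain ⟨l₂, hl₂, hm₂, rfl⟩ := exists_list_length_eq_wordLength hS h
  rw [← List.prod_append, ← hl₁, ← hl₂, ← List.length_append]
  exact wordLength_le_length fun x hx => (List.mem_append.mp hx).elim (hm₁ x) (hm₂ x)

theorem wordLength_pow_le (hS : Subgroup.closure S = ⊤) (g : G) (n : ℕ) :
    wordLength S (g ^ n) ≤ n * wordLength S g := by
  induction n with
  | zero => simp [wordLength_one]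
  | succ n ih =>
    rw [pow_succ, add_one_mul]
    exact (wordLength_mul_le hS _ _).trans (by omega)

theorem exists_list_prod_eq_inv {g : G} {n : ℕ}
    (h : ∃ l : List G, l.length = n ∧ (∀ x ∈ l, x ∈ S ∪ S⁻¹) ∧ l.prod = g) :
    ∃ l : List G, l.length = n ∧ (∀ x ∈ l, x ∈ S ∪ S⁻¹) ∧ l.prod = g⁻¹ := by
  obtain ⟨l, rfl, hl, rfl⟩ := h
  refine ⟨(l.map (·⁻¹)).reverse, by simp, ?_, List.prod_inv_reverse l ▸ rfl⟩
  simp only [List.mem_reverse, List.mem_map]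
  rintro _ ⟨x, hx, rfl⟩
  simpa [or_comm] using hl x hx

@[simp]
theorem wordLength_inv (g : G) : wordLength S g⁻¹ = wordLength S g := by
  unfold wordLength
  congr 1
  ext n
  exact ⟨fun h => inv_inv g ▸ exists_list_prod_eq_inv h, exists_list_prod_eq_inv⟩

end WordLength

section CoarseLipschitz

variable {H : Type*} [Group H] {S : Set G}

theorem le_add_mul_wordLength (hS : Subgroup.closure S = ⊤) {F : G → ℝ} {K : ℝ}
    (hF : ∀ g, ∀ s ∈ S ∪ S⁻¹, F (g * s) ≤ F g + K) (g : G) :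
    F g ≤ F 1 + K * wordLength S g := by
  obtain ⟨l, hlen, hl, rfl⟩ := exists_list_length_eq_wordLength hS g
  rw [← hlen]
  clear hlen
  induction l using List.reverseRecOn with
  | nil => simp
  | append_singleton l s ih =>
    have hs : s ∈ S ∪ S⁻¹ := hl s (by simp)
    have := ih fun x hx => hl x (by simp [hx])
    rw [List.prod_append, List.prod_singleton, List.length_append, List.length_singleton]
    push_cast
    linarith [hF l.prod s hs]

theorem wordLength_map_le {T : Set H} (hS : Subgroup.closure S = ⊤)
    (hT : Subgroup.closure T = ⊤) (f : G →* H) {k : ℕ}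
    (hk : ∀ s ∈ S, wordLength T (f s) ≤ k) (g : G) :
    wordLength T (f g) ≤ k * wordLength S g := by
  have hF : ∀ g, ∀ s ∈ S ∪ S⁻¹,
      (wordLength T (f (g * s)) : ℝ) ≤ wordLength T (f g) + k := by
    intro g s hs
    have hs' : wordLength T (f s) ≤ k := by
      rcases hs with hs | hs
      · exact hk s hs
      · simpa using hk s⁻¹ hs
    rw [map_mul]
    exact_mod_cast (wordLength_mul_le hT _ _).trans (by omega)
  have := le_add_mul_wordLength (F := fun g => (wordLength T (f g) : ℝ)) hS hF g
  simp only [map_one, wordLength_one, Nat.cast_zero, zero_add] at this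
  exact_mod_cast this

def boundedDisplacement (F : G → ℝ) : Subgroup G where
  carrier := {t | ∃ k, ∀ g, |F (g * t) - F g| ≤ k}
  one_mem' := ⟨0, by simp⟩
  mul_mem' := by
    rintro s t ⟨k, hk⟩ ⟨l, hl⟩
    refine ⟨l + k, fun g => ?_⟩
    calc |F (g * (s * t)) - F g| = |(F (g * s * t) - F (g * s)) + (F (g * s) - F g)| := by
          rw [mul_assoc]; ring_nf
      _ ≤ l + k := (abs_add_le _ _).trans (add_le_add (hl _) (hk g))
  inv_mem' := by
    rintro t ⟨k, hk⟩
    exact ⟨k, fun g => by simpa [abs_sub_comm] using hk (g * t⁻¹)⟩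

theorem boundedDisplacement_comp_eq_top {F : H → ℝ} (hF : boundedDisplacement F = ⊤)
    (π : G →* H) : boundedDisplacement (F ∘ π) = ⊤ := by
  refine eq_top_iff.mpr fun t _ => ?_
  obtain ⟨k, hk⟩ : π t ∈ boundedDisplacement F := hF ▸ Subgroup.mem_top _
  exact ⟨k, fun g => by simpa using hk (π g)⟩

theorem exists_le_add_mul_wordLength (hS : Subgroup.closure S = ⊤) (hSfin : S.Finite)
    {F : G → ℝ} (hF : boundedDisplacement F = ⊤) :
    ∃ K, 0 ≤ K ∧ ∀ g, F g ≤ F 1 + K * wordLength S g := by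
  have ht (t : G) : t ∈ boundedDisplacement F := hF ▸ Subgroup.mem_top t
  choose k hk using ht
  obtain ⟨K, hK⟩ := ((hSfin.union hSfin.inv).image k).bddAbove
  refine ⟨max K 0, le_max_right _ _, le_add_mul_wordLength hS fun g s hs => ?_⟩
  have := (le_abs_self _).trans (hk s g)
  linarith [hK (Set.mem_image_of_mem k hs), le_max_left K 0]

theorem exists_linear_bounds_wordLength_pow (hS : Subgroup.closure S = ⊤) {g : G}
    {K : ℝ} (hK : ∀ n : ℕ, (n : ℝ) ≤ K * wordLength S (g ^ n)) :
    ∃ C : ℝ, 0 < C ∧ ∀ n : ℕ,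
      1 / C * n - C ≤ wordLength S (g ^ n) ∧ (wordLength S (g ^ n) : ℝ) ≤ C * n + C := by
  have hc : (0 : ℝ) ≤ wordLength S g := Nat.cast_nonneg _
  refine ⟨|K| + wordLength S g + 1, by positivity, fun n => ⟨?_, ?_⟩⟩
  · have hw : (0 : ℝ) ≤ wordLength S (g ^ n) := Nat.cast_nonneg _
    have hn : (n : ℝ) ≤ (|K| + wordLength S g + 1) * wordLength S (g ^ n) :=
      calc (n : ℝ) ≤ K * wordLength S (g ^ n) := hK n
        _ ≤ |K| * wordLength S (g ^ n) := by gcongr; exact le_abs_self K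
        _ ≤ _ := by gcongr; linarith
    have : 1 / (|K| + wordLength S g + 1) * n ≤ (wordLength S (g ^ n) : ℝ) := by
      rwa [one_div, inv_mul_le_iff₀ (by positivity)]
    linarith [abs_nonneg K]
  · have : (wordLength S (g ^ n) : ℝ) ≤ n * wordLength S g := by
      exact_mod_cast wordLength_pow_le hS g n
    nlinarith [abs_nonneg K, Nat.cast_nonneg (α := ℝ) n]

end CoarseLipschitz

section ConjNorm

variable {H : Type*} [Group H] {S : Set G}

theorem conjNorm_le_wordLength_conj (x g : G) : conjNorm S g ≤ wordLength S (x * g * x⁻¹) :=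
  Nat.sInf_le ⟨x, rfl⟩

theorem conjNorm_le_wordLength (g : G) : conjNorm S g ≤ wordLength S g := by
  simpa using conjNorm_le_wordLength_conj (S := S) 1 g

theorem exists_conjNorm_eq (g : G) : ∃ x : G, conjNorm S g = wordLength S (x * g * x⁻¹) :=
  Nat.sInf_mem (s := {n | ∃ x : G, n = wordLength S (x * g * x⁻¹)}) ⟨_, 1, rfl⟩

@[simp]
theorem conjNorm_conj (x g : G) : conjNorm S (x * g * x⁻¹) = conjNorm S g := by
  refine le_antisymm ?_ ?_
  · obtain ⟨y, hy⟩ := exists_conjNorm_eq (S := S) g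
    calc conjNorm S (x * g * x⁻¹)
        ≤ wordLength S (y * x⁻¹ * (x * g * x⁻¹) * (y * x⁻¹)⁻¹) := conjNorm_le_wordLength_conj _ _
      _ = conjNorm S g := by rw [hy]; group
  · obtain ⟨y, hy⟩ := exists_conjNorm_eq (S := S) (x * g * x⁻¹)
    calc conjNorm S g ≤ wordLength S (y * x * g * (y * x)⁻¹) := conjNorm_le_wordLength_conj _ _
      _ = conjNorm S (x * g * x⁻¹) := by rw [hy]; group

theorem conjNorm_pos (hS : Subgroup.closure S = ⊤) {g : G} (hg : g ≠ 1) : 0 < conjNorm S g := by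
  refine Nat.pos_of_ne_zero fun h => hg ?_
  obtain ⟨x, hx⟩ := exists_conjNorm_eq (S := S) g
  have := eq_one_of_wordLength_eq_zero hS (hx.symm.trans h)
  rwa [mul_inv_eq_one, mul_eq_left] at this

theorem conjNorm_map_le {T : Set H} (hS : Subgroup.closure S = ⊤)
    (hT : Subgroup.closure T = ⊤) (f : G →* H) {k : ℕ}
    (hk : ∀ s ∈ S, wordLength T (f s) ≤ k) (g : G) :
    conjNorm T (f g) ≤ k * conjNorm S g := by
  obtain ⟨x, hx⟩ := exists_conjNorm_eq (S := S) g
  calc conjNorm T (f g) ≤ wordLength T (f x * f g * (f x)⁻¹) := conjNorm_le_wordLength_conj _ _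
    _ = wordLength T (f (x * g * x⁻¹)) := by simp
    _ ≤ k * conjNorm S g := hx ▸ wordLength_map_le hS hT f hk _

end ConjNorm

section LipschitzMetric

variable {S : Set G}

theorem conjNorm_inv_apply_eq_of_mk_eq {ψ ψ' : MulAut G} (h : (ψ : OutGroup G) = ψ') (g : G) :
    conjNorm S (ψ⁻¹ g) = conjNorm S (ψ'⁻¹ g) := by
  obtain ⟨x, hx⟩ := QuotientGroup.eq.mp h
  rw [← (eq_inv_mul_iff_mul_eq.mp hx), mul_inv_rev, MulAut.mul_apply, ← map_inv, MulAut.conj_apply]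
  simpa using (conjNorm_conj (S := S) x⁻¹ (ψ⁻¹ g)).symm

theorem dLipAut_eq_of_mk_eq {ψ₁ ψ₁' ψ₂ ψ₂' : MulAut G} (h₁ : (ψ₁ : OutGroup G) = ψ₁')
    (h₂ : (ψ₂ : OutGroup G) = ψ₂') : dLipAut S ψ₁ ψ₂ = dLipAut S ψ₁' ψ₂' := by
  simp only [dLipAut, conjNorm_inv_apply_eq_of_mk_eq h₁, conjNorm_inv_apply_eq_of_mk_eq h₂]

theorem dLipOut_mk (ψ₁ ψ₂ : MulAut G) : dLipOut S ψ₁ ψ₂ = dLipAut S ψ₁ ψ₂ := by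
  rw [dLipOut, ← csInf_singleton (dLipAut S ψ₁ ψ₂)]
  congr 1
  ext d
  constructor
  · rintro ⟨φ₁, φ₂, h₁, h₂, rfl⟩
    exact dLipAut_eq_of_mk_eq h₁ h₂
  · rintro rfl
    exact ⟨ψ₁, ψ₂, rfl, rfl, rfl⟩

end LipschitzMetric

theorem Int.abs_floor_sub_floor_le_one {α : Type*} [CommRing α] [LinearOrder α]
    [IsStrictOrderedRing α] [FloorRing α] {x y : α} (h : |x - y| ≤ 1) : |⌊x⌋ - ⌊y⌋| ≤ 1 := by
  rw [abs_le] at h ⊢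
  have hx := Int.floor_mono (show x ≤ y + 1 by linarith)
  have hy := Int.floor_mono (show y ≤ x + 1 by linarith)
  rw [Int.floor_add_one] at hx hy
  constructor <;> linarith

section IntFractions

variable {α : Type*} [Field α] [LinearOrder α] [IsStrictOrderedRing α]

theorem Int.floor_cast_div_of_isUnit [FloorRing α] (b : ℤ) {d : ℤ} (hd : IsUnit d) :
    ⌊(b : α) / d⌋ = b * d := by
  rcases Int.isUnit_iff.mp hd with rfl | rfl
  · simp
  · rw [Int.cast_neg, Int.cast_one, div_neg, div_one, ← Int.cast_neg, Int.floor_intCast]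
    ring

theorem abs_intCast_div_sub_div_le_one {a b c d : ℤ} (hdet : IsUnit (a * d - b * c))
    (hc : c ≠ 0) (hd : d ≠ 0) : |(a : α) / c - b / d| ≤ 1 := by
  have hcd : (1 : α) ≤ |(c : α) * d| := by exact_mod_cast Int.one_le_abs (mul_ne_zero hc hd)
  have hdet' : |((a * d - b * c : ℤ) : α)| = 1 := by exact_mod_cast Int.isUnit_iff_abs_eq.mp hdet
  rw [div_sub_div _ _ (by exact_mod_cast hc) (by exact_mod_cast hd), abs_div,
    div_le_one (by linarith)]
  push_cast at hdet'
  rwa [mul_comm (c : α) b, hdet']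

end IntFractions

namespace GL2

open Matrix SpecialLinearGroup ModularGroup

def swap : GL (Fin 2) ℤ :=
  ⟨!![0, 1; 1, 0], !![0, 1; 1, 0], by simp [one_fin_two], by simp [one_fin_two]⟩

theorem swap_mul_swap : swap * swap = 1 :=
  Units.ext <| by simp [swap, one_fin_two]

theorem det_swap : GeneralLinearGroup.det swap = -1 :=
  Units.ext <| by simp [swap, det_fin_two]

theorem toGL_S_eq : toGL S = (toGL T)⁻¹ * (swap * toGL T * swap) * (toGL T)⁻¹ := by
  rw [← map_inv]
  refine Units.ext ?_
  simp only [Units.val_mul, coe_GL_coe_matrix, coe_T_inv, coe_S, coe_T, swap]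
  simp

theorem closure_swap_T : Subgroup.closure {swap, toGL T} = ⊤ := by
  set H := Subgroup.closure {swap, toGL T}
  have hswap : swap ∈ H := Subgroup.subset_closure (by simp)
  have hT : toGL T ∈ H := Subgroup.subset_closure (by simp)
  have hSL : toGL.range ≤ H := by
    rw [MonoidHom.range_eq_map, ← SL2Z_generators, MonoidHom.map_closure, Subgroup.closure_le]
    rintro _ ⟨A, hA | hA, rfl⟩ <;> subst hA
    · rw [toGL_S_eq]
      exact H.mul_mem (H.mul_mem (H.inv_mem hT) (H.mul_mem (H.mul_mem hswap hT) hswap))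
        (H.inv_mem hT)
    · exact hT
  have hdet {M : GL (Fin 2) ℤ} (hM : GeneralLinearGroup.det M = 1) : M ∈ H := by
    have : M ∈ Set.range (toGL : SpecialLinearGroup (Fin 2) ℤ → GL (Fin 2) ℤ) := by
      rw [range_toGL]; exact hM
    exact hSL this
  refine eq_top_iff.mpr fun M _ => ?_
  rcases Int.units_eq_one_or (GeneralLinearGroup.det M) with hM | hM
  · exact hdet hM
  · have : M * swap ∈ H := hdet (by rw [map_mul, hM, det_swap]; rfl)
    simpa [mul_assoc, swap_mul_swap] using H.mul_mem this hswap

/-- For `M = !![a, b; c, d]` this is `⌊M • ∞⌋ = ⌊a / c⌋` for the Möbius action, or `M • 0 = b d`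
when `M` fixes `∞`. Since `|a / c - b / d| = 1 / |c d|`, it moves by at most one under right
multiplication by `swap` or `T`. -/
def floorCusp (M : GL (Fin 2) ℤ) : ℤ :=
  if M 1 0 = 0 then M 0 1 * M 1 1 else ⌊(M 0 0 : ℚ) / M 1 0⌋

theorem isUnit_det_fin_two (M : GL (Fin 2) ℤ) : IsUnit (M 0 0 * M 1 1 - M 0 1 * M 1 0) := by
  rw [← det_fin_two]
  exact (isUnit_iff_isUnit_det _).mp M.isUnit

theorem floorCusp_mul_swap (M : GL (Fin 2) ℤ) :
    floorCusp (M * swap) = if M 1 1 = 0 then M 0 0 * M 1 0 else ⌊(M 0 1 : ℚ) / M 1 1⌋ := by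
  simp [floorCusp, swap, mul_apply, Fin.sum_univ_two]

theorem floorCusp_mul_T (M : GL (Fin 2) ℤ) :
    floorCusp (M * toGL T) =
      if M 1 0 = 0 then (M 0 0 + M 0 1) * (M 1 0 + M 1 1) else ⌊(M 0 0 : ℚ) / M 1 0⌋ := by
  simp [floorCusp, mul_apply, Fin.sum_univ_two]

theorem abs_floorCusp_mul_swap_sub_le (M : GL (Fin 2) ℤ) :
    |floorCusp (M * swap) - floorCusp M| ≤ 1 := by
  have hdet := isUnit_det_fin_two M
  rw [floorCusp_mul_swap, floorCusp]
  generalize M 0 0 = a, M 0 1 = b, M 1 0 = c, M 1 1 = d at hdet ⊢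
  by_cases hc : c = 0
  · have hd : IsUnit d := isUnit_of_mul_isUnit_right (by simpa [hc] using hdet)
    simp [hc, hd.ne_zero, Int.floor_cast_div_of_isUnit b hd]
  by_cases hd : d = 0
  · have hc' : IsUnit c := isUnit_of_mul_isUnit_right (by simpa [hd] using hdet.neg)
    simp [hc, hd, Int.floor_cast_div_of_isUnit a hc']
  rw [if_neg hd, if_neg hc, abs_sub_comm]
  exact Int.abs_floor_sub_floor_le_one (abs_intCast_div_sub_div_le_one hdet hc hd)

theorem abs_floorCusp_mul_T_sub_le (M : GL (Fin 2) ℤ) :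
    |floorCusp (M * toGL T) - floorCusp M| ≤ 1 := by
  have hdet := isUnit_det_fin_two M
  rw [floorCusp_mul_T, floorCusp]
  generalize M 0 0 = a, M 0 1 = b, M 1 0 = c, M 1 1 = d at hdet ⊢
  by_cases hc : c = 0
  · simp only [hc, if_true, mul_zero, sub_zero, zero_add] at hdet ⊢
    rw [show (a + b) * d - b * d = a * d by ring, Int.isUnit_iff_abs_eq.mp hdet]
  · simp [hc]

theorem boundedDisplacement_floorCusp : boundedDisplacement (fun M ↦ (floorCusp M : ℝ)) = ⊤ := by
  rw [eq_top_iff, ← closure_swap_T, Subgroup.closure_le]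
  rintro t (rfl | rfl)
  · exact ⟨1, fun M => by dsimp only; exact_mod_cast abs_floorCusp_mul_swap_sub_le M⟩
  · exact ⟨1, fun M => by dsimp only; exact_mod_cast abs_floorCusp_mul_T_sub_le M⟩

theorem floorCusp_T_pow (n : ℕ) : floorCusp (toGL T ^ n) = n := by
  rw [← map_pow, ← zpow_natCast]
  have h : (toGL (T ^ (n : ℤ)) : Matrix (Fin 2) (Fin 2) ℤ) = !![1, (n : ℤ); 0, 1] := coe_T_zpow n
  simp only [floorCusp, h]
  simp

end GL2

namespace FreeGroup

variable {ι : Type*} [DecidableEq ι]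

def exponentSum : FreeGroup ι →* Multiplicative (ι → ℤ) :=
  lift fun i => .ofAdd (Pi.single i 1)

@[simp]
theorem toAdd_exponentSum_of (i : ι) : (exponentSum (of i)).toAdd = Pi.single i 1 := by
  simp [exponentSum]

theorem exponentSum_conj (x g : FreeGroup ι) : exponentSum (x * g * x⁻¹) = exponentSum g := by
  simp [mul_comm (exponentSum x)]

def abelianizationMatrix (ψ : MulAut (FreeGroup ι)) : Matrix ι ι ℤ :=
  .of fun i j => (exponentSum (ψ (of j))).toAdd i

theorem abelianizationMatrix_one : abelianizationMatrix (1 : MulAut (FreeGroup ι)) = 1 := by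
  ext i j
  simp [abelianizationMatrix, Matrix.one_apply, Pi.single_apply]

variable [Fintype ι]

theorem toAdd_exponentSum_apply (ψ : MulAut (FreeGroup ι)) (g : FreeGroup ι) :
    (exponentSum (ψ g)).toAdd = (abelianizationMatrix ψ).mulVec (exponentSum g).toAdd := by
  have h : exponentSum.comp ψ.toMonoidHom = (AddMonoidHom.toMultiplicative
      (abelianizationMatrix ψ).mulVecLin.toAddMonoidHom).comp exponentSum := by
    refine ext_hom _ _ fun j => ?_
    ext i
    simp [abelianizationMatrix]
  exact congrArg Multiplicative.toAdd (DFunLike.congr_fun h g)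

theorem abelianizationMatrix_mul (ψ₁ ψ₂ : MulAut (FreeGroup ι)) :
    abelianizationMatrix (ψ₁ * ψ₂) = abelianizationMatrix ψ₁ * abelianizationMatrix ψ₂ := by
  ext i j
  change (exponentSum (ψ₁ (ψ₂ (of j)))).toAdd i = _
  rw [toAdd_exponentSum_apply ψ₁]
  rfl

def autToGL : MulAut (FreeGroup ι) →* GL ι ℤ where
  toFun ψ := ⟨abelianizationMatrix ψ, abelianizationMatrix ψ⁻¹,
    by rw [← abelianizationMatrix_mul, mul_inv_cancel, abelianizationMatrix_one],
    by rw [← abelianizationMatrix_mul, inv_mul_cancel, abelianizationMatrix_one]⟩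
  map_one' := Units.ext abelianizationMatrix_one
  map_mul' ψ₁ ψ₂ := Units.ext (abelianizationMatrix_mul ψ₁ ψ₂)

theorem autToGL_conj (x : FreeGroup ι) : autToGL (MulAut.conj x) = 1 := by
  refine Units.ext ?_
  ext i j
  simp [autToGL, abelianizationMatrix, exponentSum_conj, Matrix.one_apply, Pi.single_apply]

def outToGL : OutGroup (FreeGroup ι) →* GL ι ℤ :=
  QuotientGroup.lift _ autToGL <| by
    rintro _ ⟨x, rfl⟩
    exact autToGL_conj x

theorem sum_abs_exponentSum_le_wordLength (g : FreeGroup ι) :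
    ∑ i, |(exponentSum g).toAdd i| ≤ wordLength (Set.range of) g := by
  have hstep : ∀ g : FreeGroup ι, ∀ s ∈ Set.range of ∪ (Set.range of)⁻¹,
      ((∑ i, |(exponentSum (g * s)).toAdd i| : ℤ) : ℝ) ≤
        (∑ i, |(exponentSum g).toAdd i| : ℤ) + 1 := by
    intro g s hs
    obtain ⟨j, hj⟩ : ∃ j, s = of j ∨ s = (of j)⁻¹ := by
      rcases hs with ⟨j, rfl⟩ | ⟨j, hj⟩
      · exact ⟨j, .inl rfl⟩
      · exact ⟨j, .inr (by rw [hj, inv_inv])⟩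
    have hsum : ∑ i, |(exponentSum s).toAdd i| = 1 := by
      rcases hj with rfl | rfl <;> simp [Pi.single_apply, apply_ite]
    have := Finset.sum_le_sum fun i (_ : i ∈ Finset.univ) =>
      abs_add_le ((exponentSum g).toAdd i) ((exponentSum s).toAdd i)
    rw [Finset.sum_add_distrib, hsum] at this
    exact_mod_cast (by simpa using this)
  have := le_add_mul_wordLength (F := fun g => ((∑ i, |(exponentSum g).toAdd i| : ℤ) : ℝ))
    (closure_range_of ι) hstep g
  simp only [_root_.map_one, toAdd_one, Pi.zero_apply, abs_zero, Finset.sum_const_zero,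
    Int.cast_zero, one_mul, zero_add] at this
  exact_mod_cast this

theorem sum_abs_exponentSum_le_conjNorm (g : FreeGroup ι) :
    ∑ i, |(exponentSum g).toAdd i| ≤ conjNorm (Set.range of) g := by
  obtain ⟨x, hx⟩ := exists_conjNorm_eq (S := Set.range of) g
  rw [hx, ← exponentSum_conj x]
  exact sum_abs_exponentSum_le_wordLength _

end FreeGroup

open FreeGroup (of outToGL)

def IsDehnTwist (φ : MulAut (FreeGroup (Fin 2))) : Prop :=
  φ (of 0) = of 0 ∧ φ (of 1) = of 1 * of 0

theorem range_of_fin_two : Set.range (of : Fin 2 → FreeGroup (Fin 2)) = {of 0, of 1} := by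
  ext x
  simp [Fin.exists_fin_two, eq_comm]

theorem closure_of_zero_of_one :
    Subgroup.closure {of 0, of 1} = (⊤ : Subgroup (FreeGroup (Fin 2))) :=
  range_of_fin_two ▸ FreeGroup.closure_range_of (Fin 2)

theorem wordLength_of_one_mul_inv_pow_le (n : ℕ) :
    wordLength {of 0, of 1} (of 1 * (of 0 ^ n)⁻¹ : FreeGroup (Fin 2)) ≤ n + 1 := by
  have h := wordLength_le_length (S := ({of 0, of 1} : Set (FreeGroup (Fin 2))))
    (l := of 1 :: List.replicate n (of 0)⁻¹) (by simp [or_imp, forall_and, List.mem_replicate])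
  simpa [List.prod_replicate, add_comm] using h

theorem conjNorm_of_one_mul_inv_pow (n : ℕ) :
    conjNorm {of 0, of 1} (of 1 * (of 0 ^ n)⁻¹ : FreeGroup (Fin 2)) = n + 1 := by
  refine le_antisymm ((conjNorm_le_wordLength _).trans (wordLength_of_one_mul_inv_pow_le n)) ?_
  have := FreeGroup.sum_abs_exponentSum_le_conjNorm (of 1 * (of 0 ^ n)⁻¹ : FreeGroup (Fin 2))
  rw [range_of_fin_two] at this
  simp [Fin.sum_univ_two, Pi.single_apply] at this
  omega

namespace IsDehnTwist

variable {φ : MulAut (FreeGroup (Fin 2))}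

theorem pow_apply_of_zero (hφ : IsDehnTwist φ) (n : ℕ) : (φ ^ n) (of 0) = of 0 := by
  induction n with
  | zero => rfl
  | succ n ih => rw [pow_succ', MulAut.mul_apply, ih, hφ.1]

theorem pow_apply_of_one (hφ : IsDehnTwist φ) (n : ℕ) : (φ ^ n) (of 1) = of 1 * of 0 ^ n := by
  induction n with
  | zero => simp
  | succ n ih =>
    rw [pow_succ', MulAut.mul_apply, ih, map_mul, map_pow, hφ.1, hφ.2, mul_assoc, ← pow_succ']

theorem inv_pow_apply_of_zero (hφ : IsDehnTwist φ) (n : ℕ) : (φ ^ n)⁻¹ (of 0) = of 0 := by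
  conv_lhs => rw [← hφ.pow_apply_of_zero n]
  exact MulAut.inv_apply_self _ _ _

theorem inv_pow_apply_of_one (hφ : IsDehnTwist φ) (n : ℕ) :
    (φ ^ n)⁻¹ (of 1) = of 1 * (of 0 ^ n)⁻¹ := by
  have : (φ ^ n) (of 1 * (of 0 ^ n)⁻¹) = of 1 := by
    rw [map_mul, map_inv, map_pow, hφ.pow_apply_of_one, hφ.pow_apply_of_zero, mul_inv_cancel_right]
  conv_lhs => rw [← this]
  exact MulAut.inv_apply_self _ _ _

theorem conjNorm_inv_pow_apply_le (hφ : IsDehnTwist φ) (n : ℕ) (g : FreeGroup (Fin 2)) :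
    conjNorm {of 0, of 1} ((φ ^ n)⁻¹ g) ≤ (n + 1) * conjNorm {of 0, of 1} g := by
  refine conjNorm_map_le closure_of_zero_of_one closure_of_zero_of_one
    (φ ^ n)⁻¹.toMonoidHom (fun s hs => ?_) g
  rcases hs with rfl | rfl
  · rw [MulEquiv.coe_toMonoidHom, hφ.inv_pow_apply_of_zero]
    exact (wordLength_le_one_of_mem (by simp)).trans (by omega)
  · rw [MulEquiv.coe_toMonoidHom, hφ.inv_pow_apply_of_one]
    exact wordLength_of_one_mul_inv_pow_le n

theorem isGreatest_conjNorm_ratio (hφ : IsDehnTwist φ) (n : ℕ) :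
    IsGreatest {r : ℝ | ∃ g, g ≠ 1 ∧
      r = (conjNorm {of 0, of 1} ((φ ^ n)⁻¹ g) : ℝ) / conjNorm {of 0, of 1} g} (n + 1) := by
  refine ⟨⟨of 1, FreeGroup.of_ne_one 1, ?_⟩, ?_⟩
  · have h₀ := conjNorm_of_one_mul_inv_pow 0
    rw [pow_zero, inv_one, mul_one] at h₀
    rw [hφ.inv_pow_apply_of_one, conjNorm_of_one_mul_inv_pow, h₀]
    simp
  · rintro _ ⟨g, hg, rfl⟩
    have hpos : (0 : ℝ) < conjNorm {of 0, of 1} g := by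
      exact_mod_cast conjNorm_pos closure_of_zero_of_one hg
    rw [div_le_iff₀ hpos]
    exact_mod_cast hφ.conjNorm_inv_pow_apply_le n g

theorem dLipOut_one_pow (hφ : IsDehnTwist φ) (n : ℕ) :
    dLipOut {of 0, of 1} 1 ((φ : OutGroup (FreeGroup (Fin 2))) ^ n) = Real.log (n + 1) := by
  rw [← QuotientGroup.mk_pow, ← QuotientGroup.mk_one, dLipOut_mk, dLipAut]
  simp only [inv_one, MulAut.one_apply]
  rw [(hφ.isGreatest_conjNorm_ratio n).csSup_eq]

theorem outToGL_eq (hφ : IsDehnTwist φ) :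
    outToGL (φ : OutGroup (FreeGroup (Fin 2))) =
      Matrix.SpecialLinearGroup.toGL ModularGroup.T := by
  refine Units.ext ?_
  ext i j
  fin_cases i <;> fin_cases j <;>
    simp [outToGL, FreeGroup.autToGL, FreeGroup.abelianizationMatrix, hφ.1, hφ.2]

theorem exists_le_mul_wordLength_pow (hφ : IsDehnTwist φ)
    {T : Set (OutGroup (FreeGroup (Fin 2)))} (hT : Subgroup.closure T = ⊤) (hTfin : T.Finite) :
    ∃ K, 0 ≤ K ∧
      ∀ n : ℕ, (n : ℝ) ≤ K * wordLength T ((φ : OutGroup (FreeGroup (Fin 2))) ^ n) := by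
  obtain ⟨K, hK₀, hK⟩ := exists_le_add_mul_wordLength hT hTfin
    (boundedDisplacement_comp_eq_top GL2.boundedDisplacement_floorCusp outToGL)
  refine ⟨K, hK₀, fun n => ?_⟩
  have hF (m : ℕ) :
      (GL2.floorCusp (outToGL ((φ : OutGroup (FreeGroup (Fin 2))) ^ m)) : ℝ) = m := by
    rw [map_pow, hφ.outToGL_eq, GL2.floorCusp_T_pow]; rfl
  have h₀ := hF 0
  rw [pow_zero] at h₀
  have := hK ((φ : OutGroup (FreeGroup (Fin 2))) ^ n)
  dsimp only [Function.comp_apply] at this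
  rwa [hF n, h₀, Nat.cast_zero, zero_add] at this

end IsDehnTwist

theorem exists_nat_mul_log_add_lt (A B : ℝ) : ∃ n : ℕ, A * Real.log (n + 1) + B < n := by
  set A' := max A 1
  have hA' : 0 < A' := lt_max_of_lt_right one_pos
  obtain ⟨n, hn⟩ := exists_nat_gt (1 + 2 * (A' * Real.log (2 * A') + B))
  refine ⟨n, ?_⟩
  have hlog : Real.log (n + 1) ≤ (n + 1) / (2 * A') + Real.log (2 * A') := by
    have := Real.log_le_sub_one_of_pos (x := (n + 1) / (2 * A')) (by positivity)
    rw [Real.log_div (by positivity) (by positivity)] at this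
    linarith
  have hlog₀ : 0 ≤ Real.log (n + 1) := Real.log_nonneg (by linarith [n.cast_nonneg (α := ℝ)])
  calc A * Real.log (n + 1) + B ≤ A' * Real.log (n + 1) + B := by
        gcongr; exact le_max_left A 1
    _ ≤ A' * ((n + 1) / (2 * A') + Real.log (2 * A')) + B := by gcongr
    _ = (n + 1) / 2 + A' * Real.log (2 * A') + B := by field_simp
    _ < n := by linarith

/-- For the Dehn twist automorphism `φ` of `F = F(a,b)`
(`φ(a) = a`, `φ(b) = ba`, with `a = FreeGroup.of 0`, `b = FreeGroup.of 1`) and any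
finite generating set `T` of `Out(F)`, the orbit `n ↦ d_T(1, Φⁿ)` grows linearly
while `n ↦ d_Lip(1, Φⁿ)` grows logarithmically; consequently the identity map is
not a quasi-isometry between `(Out F, d_Lip)` and `(Out F, d_T)`. -/
theorem lipschitz_not_qi_to_word_metric (φ : MulAut (FreeGroup (Fin 2)))
    (hφa : φ (FreeGroup.of (0 : Fin 2)) = FreeGroup.of (0 : Fin 2))
    (hφb : φ (FreeGroup.of (1 : Fin 2)) =
      FreeGroup.of (1 : Fin 2) * FreeGroup.of (0 : Fin 2))
    (T : Set (OutGroup (FreeGroup (Fin 2)))) (hTfin : T.Finite)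
    (hTgen : Subgroup.closure T = ⊤) :
    (∃ C : ℝ, 0 < C ∧ ∀ n : ℕ,
      (1 / C) * n - C ≤
          (wordLength T ((φ : OutGroup (FreeGroup (Fin 2))) ^ n) : ℝ) ∧
        (wordLength T ((φ : OutGroup (FreeGroup (Fin 2))) ^ n) : ℝ) ≤
          C * n + C) ∧
    (∃ C : ℝ, 0 < C ∧ ∀ n : ℕ,
      (1 / C) * Real.log (n + 1) - C ≤
          dLipOut {FreeGroup.of (0 : Fin 2), FreeGroup.of (1 : Fin 2)} 1
            ((φ : OutGroup (FreeGroup (Fin 2))) ^ n) ∧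
        dLipOut {FreeGroup.of (0 : Fin 2), FreeGroup.of (1 : Fin 2)} 1
            ((φ : OutGroup (FreeGroup (Fin 2))) ^ n) ≤
          C * Real.log (n + 1) + C) ∧
    ¬ (∃ κ ℓ : ℝ, 1 ≤ κ ∧ 0 ≤ ℓ ∧ ∀ Φ₁ Φ₂ : OutGroup (FreeGroup (Fin 2)),
        κ⁻¹ * dLipOut {FreeGroup.of (0 : Fin 2), FreeGroup.of (1 : Fin 2)} Φ₁ Φ₂
            - ℓ ≤ (wordLength T (Φ₁⁻¹ * Φ₂) : ℝ) ∧
          (wordLength T (Φ₁⁻¹ * Φ₂) : ℝ) ≤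
            κ * dLipOut {FreeGroup.of (0 : Fin 2), FreeGroup.of (1 : Fin 2)} Φ₁ Φ₂
              + ℓ) := by
  have hφ : IsDehnTwist φ := ⟨hφa, hφb⟩
  obtain ⟨K, hK₀, hK⟩ := hφ.exists_le_mul_wordLength_pow hTgen hTfin
  refine ⟨exists_linear_bounds_wordLength_pow hTgen hK,
    ⟨1, one_pos, fun n => by rw [hφ.dLipOut_one_pow]; constructor <;> linarith⟩, ?_⟩
  rintro ⟨κ, ℓ, -, -, hqi⟩
  obtain ⟨n, hn⟩ := exists_nat_mul_log_add_lt (K * κ) (K * ℓ)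
  have hupper := (hqi 1 ((φ : OutGroup (FreeGroup (Fin 2))) ^ n)).2
  rw [inv_one, one_mul, hφ.dLipOut_one_pow] at hupper
  nlinarith [hK n, mul_le_mul_of_nonneg_left hupper hK₀]
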